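/- Let (H, α, σ) be a unicellular map of genus g with face γ = ασ, and let a₁ <_m a₂ <_m a₃ be three half-edges belonging to three distinct cycles of σ. Write the three cycles as v_i = (a_i, h¹_i, ..., h^{m_i}_i), and let σ̄ be obtained from σ by replacing these three cycles by the single cycle (a₁, h¹₂,...,h^{m₂}₂, a₂, h¹₃,...,h^{m₃}₃, a₃, h¹₁,...,h^{m₁}₁). Then γ̄ = ασ̄ is a single 2n-cycle, so (H, α, σ̄) is a unicellular map, and its genus is g+1. -/

import Mathlib

/-!
Right multiplication by a transposition `(x y)` merges the cycles of `x` and `y` when these are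
different, so it lowers the number of cycles by one. The vertex permutation
`σ̄ = σ (a₁ a₂) (a₂ a₃)` thus has two cycles fewer than `σ`, which is exactly genus `g + 1`
once `γ̄` is known to be a single cycle. For the face, `γ (a₁ a₂)` splits `γ` into the arc
`(a₁, a₂]` of the root order and its complement; as `a₁ <ₘ a₂ <ₘ a₃`, the half-edge `a₃` lies in
the complement while `a₂` lies in the arc, so the second transposition glues the two pieces back
into one cycle.
-/

open Equiv

/-- Number of cycles of a permutation (fixed points count as cycles). -/
noncomputable def cycleCount {H : Type*} [Fintype H] [DecidableEq H]
    (σ : Equiv.Perm H) : ℕ :=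
  σ.cycleType.card + Fintype.card {x // σ x = x}

namespace Equiv.Perm

variable {α : Type*} {f : Perm α} {a b x y : α}

theorem SameCycle.mem_of_mapsTo [Finite α] {s : Set α} (h : f.SameCycle a b)
    (hs : Set.MapsTo f s s) (ha : a ∈ s) : b ∈ s := by
  obtain ⟨k, -, rfl⟩ := h.exists_pow_eq'
  rw [coe_pow]
  exact hs.iterate k ha

variable [DecidableEq α]

theorem SameCycle.of_mul_swap_of_sameCycle [Finite α] (hxy : f.SameCycle x y)
    (h : (f * swap x y).SameCycle a b) : f.SameCycle a b := by
  refine h.mem_of_mapsTo (s := {z | f.SameCycle a z}) (fun z hz => ?_) (SameCycle.refl f a)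
  have hswap : f.SameCycle z (swap x y z) := by
    rcases eq_or_ne z x with rfl | hzx
    · simpa using hxy
    rcases eq_or_ne z y with rfl | hzy
    · simpa using hxy.symm
    · rw [swap_apply_of_ne_of_ne hzx hzy]
  exact (hz.trans hswap).apply_right

theorem sameCycle_mul_swap_of_not_sameCycle [Finite α] (h : ¬ f.SameCycle x y) :
    (f * swap x y).SameCycle x y := by
  -- The `f`-orbit of `y`, intersected with the new orbit of `x`, is `f`-stable and contains `f y`.
  set s : Set α := {z | f.SameCycle y z ∧ (f * swap x y).SameCycle x z}
  have hmaps : Set.MapsTo f s s := by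
    rintro z ⟨hyz, hxz⟩
    refine ⟨hyz.apply_right, ?_⟩
    rcases eq_or_ne z y with rfl | hzy
    · simpa using (SameCycle.refl (f * swap x z) x).apply_right
    have hzx : z ≠ x := by
      rintro rfl
      exact h hyz.symm
    simpa [swap_apply_of_ne_of_ne hzx hzy] using hxz.apply_right
  have hfy : f y ∈ s :=
    ⟨(SameCycle.refl f y).apply_right, by simpa using (SameCycle.refl (f * swap x y) x).apply_right⟩
  exact ((sameCycle_apply_left.mpr (SameCycle.refl f y)).mem_of_mapsTo hmaps hfy).2

theorem SameCycle.mul_swap_of_not_sameCycle [Finite α] (hxy : ¬ f.SameCycle x y)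
    (h : f.SameCycle a b) : (f * swap x y).SameCycle a b :=
  (sameCycle_mul_swap_of_not_sameCycle hxy).of_mul_swap_of_sameCycle
    (by rwa [mul_swap_mul_self])

theorem SameCycle.of_mul_swap_of_not_sameCycle_left [Finite α] (hx : ¬ f.SameCycle a x)
    (hy : ¬ f.SameCycle a y) (h : (f * swap x y).SameCycle a b) : f.SameCycle a b := by
  refine h.mem_of_mapsTo (s := {z | f.SameCycle a z}) (fun z hz => ?_) (SameCycle.refl f a)
  have hzx : z ≠ x := by
    rintro rfl
    exact hx hz
  have hzy : z ≠ y := by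
    rintro rfl
    exact hy hz
  simpa [swap_apply_of_ne_of_ne hzx hzy] using hz.apply_right

theorem SameCycle.of_mul_swap_of_not_sameCycle [Finite α] (ha : ¬ f.SameCycle a y)
    (hb : ¬ f.SameCycle b y) (h : (f * swap x y).SameCycle a b) : f.SameCycle a b := by
  by_cases hax : f.SameCycle a x
  · by_cases hbx : f.SameCycle b x
    · exact hax.trans hbx.symm
    · exact (h.symm.of_mul_swap_of_not_sameCycle_left hbx hb).symm
  · exact h.of_mul_swap_of_not_sameCycle_left hax ha

theorem card_quotient_sameCycle_mul_swap [Finite α] (h : ¬ f.SameCycle x y) :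
    Nat.card (Quotient (SameCycle.setoid (f * swap x y))) + 1 =
      Nat.card (Quotient (SameCycle.setoid f)) := by
  classical
  set c : Quotient (SameCycle.setoid f) := ⟦y⟧
  let π : {q // q ≠ c} → Quotient (SameCycle.setoid (f * swap x y)) := fun q =>
    Quotient.map id (fun _ _ => SameCycle.mul_swap_of_not_sameCycle h) q.1
  have hπ : π.Bijective := by
    constructor
    · rintro ⟨q₁, hq₁⟩ ⟨q₂, hq₂⟩ hq
      induction q₁ using Quotient.inductionOn with | h a => ?_
      induction q₂ using Quotient.inductionOn with | h b => ?_
      refine Subtype.ext (Quotient.sound ?_)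
      exact SameCycle.of_mul_swap_of_not_sameCycle (fun hay => hq₁ (Quotient.sound hay))
        (fun hby => hq₂ (Quotient.sound hby)) (Quotient.exact hq)
    · refine Quotient.ind fun a => ?_
      by_cases hya : f.SameCycle y a
      · refine ⟨⟨⟦x⟧, fun hxy => h (Quotient.exact hxy)⟩, Quotient.sound ?_⟩
        exact (sameCycle_mul_swap_of_not_sameCycle h).trans (hya.mul_swap_of_not_sameCycle h)
      · exact ⟨⟨⟦a⟧, fun hay => hya (Quotient.exact hay).symm⟩, rfl⟩
  rw [← Nat.card_congr (Equiv.optionSubtypeNe c), Finite.card_option,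
    Nat.card_eq_of_bijective π hπ]

theorem not_sameCycle_mul_swap_of_notMem_Ioc {N : ℕ} (e : Fin N ≃ α) {γ : Perm α}
    (hsucc : ∀ (k : Fin N) (hk : (k : ℕ) + 1 < N), γ (e k) = e ⟨k + 1, hk⟩)
    {i j k : Fin N} (hij : i < j) (hk : k ∉ Set.Ioc i j) :
    ¬ (γ * swap (e i) (e j)).SameCycle (e j) (e k) := by
  have : Finite α := Finite.of_equiv _ e
  have hmaps : Set.MapsTo (γ * swap (e i) (e j)) (e '' Set.Ioc i j) (e '' Set.Ioc i j) := by
    rintro _ ⟨l, ⟨hil, hlj⟩, rfl⟩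
    rcases hlj.eq_or_lt with rfl | hlj
    · refine ⟨⟨i + 1, by omega⟩, ⟨?_, ?_⟩, ?_⟩
      · simp [Fin.lt_def]
      · simp only [Fin.le_def]
        omega
      · rw [mul_apply, swap_apply_right, hsucc]
    · refine ⟨⟨l + 1, by omega⟩, ⟨?_, ?_⟩, ?_⟩
      · simp only [Fin.lt_def] at hil ⊢
        omega
      · simp only [Fin.lt_def, Fin.le_def] at hlj ⊢
        omega
      · rw [mul_apply, swap_apply_of_ne_of_ne (e.injective.ne hil.ne') (e.injective.ne hlj.ne),
          hsucc]
  intro h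
  exact hk (e.injective.mem_set_image.1 (h.mem_of_mapsTo hmaps ⟨j, ⟨hij, le_rfl⟩, rfl⟩))

variable [Fintype α]

theorem cycleCount_eq_card_quotient (f : Perm α) :
    cycleCount f = Nat.card (Quotient (SameCycle.setoid f)) := by
  let cls : α → f.cycleFactorsFinset ⊕ {z // f z = z} := fun a =>
    if ha : f a = a then .inr ⟨a, ha⟩
    else .inl ⟨f.cycleOf a, cycleOf_mem_cycleFactorsFinset_iff.mpr (mem_support.mpr ha)⟩
  have hcls : ∀ a b, cls a = cls b ↔ f.SameCycle a b := by
    intro a b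
    by_cases ha : f a = a <;> by_cases hb : f b = b
    · simpa [cls, ha, hb] using ⟨fun hab => hab ▸ SameCycle.refl f a, fun h => h.eq_of_left ha⟩
    · simpa [cls, ha, hb] using fun h => hb (h.apply_eq_self_iff.1 ha)
    · simpa [cls, ha, hb] using fun h => ha (h.apply_eq_self_iff.2 hb)
    · simpa [cls, ha, hb] using
        (sameCycle_iff_cycleOf_eq_of_mem_support (mem_support.2 ha) (mem_support.2 hb)).symm
  let F : Quotient (SameCycle.setoid f) → f.cycleFactorsFinset ⊕ {z // f z = z} :=
    Quotient.lift cls fun a b h => (hcls a b).2 h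
  have hF : F.Bijective := by
    refine ⟨Quotient.ind₂ fun a b h => Quotient.sound ((hcls a b).1 h), ?_⟩
    rintro (⟨c, hc⟩ | ⟨z, hz⟩)
    · obtain ⟨a, ha⟩ := (mem_cycleFactorsFinset_iff.mp hc).1.nonempty_support
      have hfa : f a ≠ a := mem_support.mp (mem_cycleFactorsFinset_support_le hc ha)
      exact ⟨⟦a⟧, by simp [F, cls, hfa, cycle_is_cycleOf ha hc]⟩
    · exact ⟨⟦z⟧, by simp [F, cls, hz]⟩
  rw [Nat.card_eq_of_bijective F hF, Nat.card_sum, Nat.card_eq_fintype_card,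
    Nat.card_eq_fintype_card, Fintype.card_coe, cycleCount, cycleType_def, Multiset.card_map]
  rfl

theorem cycleCount_mul_swap (h : ¬ f.SameCycle x y) :
    cycleCount (f * swap x y) + 1 = cycleCount f := by
  rw [cycleCount_eq_card_quotient, cycleCount_eq_card_quotient]
  exact card_quotient_sameCycle_mul_swap h

theorem cycleCount_eq_one_iff (hα : 1 < Fintype.card α) :
    cycleCount f = 1 ↔ f.IsCycle ∧ f.support = Finset.univ := by
  have hfix : Fintype.card {z // f z = z} = 0 ↔ f.support = Finset.univ := by
    simp [Fintype.card_eq_zero_iff, Finset.eq_univ_iff_forall, isEmpty_subtype]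
  constructor
  · intro h
    have hne : f ≠ 1 := by
      rintro rfl
      simp [cycleCount] at h
      omega
    have hpos := card_cycleType_pos.2 hne
    unfold cycleCount at h
    exact ⟨card_cycleType_eq_one.1 (by omega), hfix.1 (by omega)⟩
  · rintro ⟨hc, hs⟩
    rw [cycleCount, card_cycleType_eq_one.2 hc, hfix.2 hs]

end Equiv.Perm

open Equiv.Perm

/-- The merged vertex permutation `σ̄` is `σ * (swap a₁ a₂ * swap a₂ a₃)`: it sends
`a₁ ↦ σ a₂`, `a₂ ↦ σ a₃`, `a₃ ↦ σ a₁` and agrees with `σ` elsewhere. -/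
theorem gluing_increases_genus {H : Type*} [Fintype H] [DecidableEq H]
    (n g : ℕ) (hn : 1 ≤ n) (hcard : Fintype.card H = 2 * n)
    (α σ : Equiv.Perm H)
    (hface : (α * σ).IsCycle ∧ (α * σ).support = Finset.univ)
    (hgenus : cycleCount σ + 2 * g = n + 1)
    (ord : Fin (2 * n) ≃ H)
    (hordsucc : ∀ k : Fin (2 * n), (α * σ) (ord k) = ord (k + ⟨1, by omega⟩))
    (a₁ a₂ a₃ : H)
    (h12 : ord.symm a₁ < ord.symm a₂) (h23 : ord.symm a₂ < ord.symm a₃)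
    (hc12 : ¬ σ.SameCycle a₁ a₂) (hc13 : ¬ σ.SameCycle a₁ a₃)
    (hc23 : ¬ σ.SameCycle a₂ a₃)
    (σ' : Equiv.Perm H)
    (hσ' : σ' = σ * (Equiv.swap a₁ a₂ * Equiv.swap a₂ a₃)) :
    (α * σ').IsCycle ∧ (α * σ').support = Finset.univ ∧
      cycleCount σ' + 2 * (g + 1) = n + 1 := by
  subst hσ'
  have hH : 1 < Fintype.card H := by omega
  have hsucc (k : Fin (2 * n)) (hk : (k : ℕ) + 1 < 2 * n) :
      (α * σ) (ord k) = ord ⟨k + 1, hk⟩ := by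
    rw [hordsucc]
    congr 1
    ext
    simp [Fin.val_add, Nat.mod_eq_of_lt hk]
  obtain ⟨i₁, rfl⟩ := ord.surjective a₁
  obtain ⟨i₂, rfl⟩ := ord.surjective a₂
  obtain ⟨i₃, rfl⟩ := ord.surjective a₃
  simp only [Equiv.symm_apply_apply] at h12 h23
  have hsplit := not_sameCycle_mul_swap_of_notMem_Ioc ord hsucc h12 (k := i₁) (by simp)
  have hglue := not_sameCycle_mul_swap_of_notMem_Ioc ord hsucc h12 (k := i₃) (by simp [h23])
  have hface₁ := cycleCount_mul_swap (hsplit ∘ SameCycle.symm)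
  rw [mul_swap_mul_self] at hface₁
  have hface₂ := cycleCount_mul_swap hglue
  have hvert₁ := cycleCount_mul_swap hc12
  have hapart : ¬ (σ * swap (ord i₁) (ord i₂)).SameCycle (ord i₂) (ord i₃) := fun h =>
    hc23 (h.symm.of_mul_swap_of_not_sameCycle_left (hc13 ∘ SameCycle.symm)
      (hc23 ∘ SameCycle.symm)).symm
  have hvert₂ := cycleCount_mul_swap hapart
  have hγ := (cycleCount_eq_one_iff hH).2 hface
  simp only [← mul_assoc]
  rw [← and_assoc, ← cycleCount_eq_one_iff hH]
  omega
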